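/- Let (i₁,j₁),…,(i_l,j_l) be pairs of natural numbers with j_h < i_h for each h. Then for all coefficient sequences a, b: D(a (∗_{i₁,j₁}⋯∗_{i_l,j_l}) b) = (D a) (∗_{i₁+1,j₁+1}⋯∗_{i_l+1,j_l+1}) b + a (∗_{i₁+1,j₁}⋯∗_{i_l+1,j_l}∗_{1,0}) (D b). -/

import Mathlib

/-!
The `k`-th term of `(D(a ∗ b))ₙ` carries `binomψ(n+1, k)`. The ψ-Pascal rule
`binomψ(n+1, k+1) = binomψ(n, k) + F(n+1, k+1) · binomψ(n, k+1)` (together with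
`binomψ(n+1, 0) = F(n+1, 0) · binomψ(n, 0)`) splits the sum in two: the first part is the
product of `D a` with `b`, and in the second, re-indexed, the extra factor `F(n+1, k)` is
exactly the new pair `(1, 0)` appended to the product of `a` with `D b`.
-/

open Finset

/-- The ψ-factorial: ψₙ! = ψ₁ψ₂⋯ψₙ, with ψ₀! = 1. -/
noncomputable def psiFact (ψ : ℕ → ℂ) : ℕ → ℂ
  | 0 => 1
  | n + 1 => psiFact ψ n * ψ (n + 1)

/-- The ψ-binomial coefficient binomψ(n,k) = ψₙ!/(ψₖ!·ψ_{n−k}!). -/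
noncomputable def psiBinom (ψ : ℕ → ℂ) (n k : ℕ) : ℂ :=
  psiFact ψ n / (psiFact ψ k * psiFact ψ (n - k))

/-- The Fontané numbers F(n,k) = (ψₙ − ψₖ)/ψ_{n−k}. -/
noncomputable def Fker (ψ : ℕ → ℂ) (n k : ℕ) : ℂ :=
  (ψ n - ψ k) / ψ (n - k)

/-- The concatenated Fontané product ∗_{i₁,j₁}⋯∗_{i_l,j_l} indexed by a list of pairs. -/
noncomputable def fontaneL (ψ : ℕ → ℂ) (L : List (ℕ × ℕ)) (a b : ℕ → ℂ) (n : ℕ) : ℂ :=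
  ∑ k ∈ Finset.range (n + 1),
    (L.map fun p => Fker ψ (n + p.1) (k + p.2)).prod * psiBinom ψ n k * a k * b (n - k)

/-- The ψ-derivative on coefficient sequences: the shift (D a)ₙ = a_{n+1}. -/
def Dpsi (a : ℕ → ℂ) (n : ℕ) : ℂ := a (n + 1)

section PsiBinom

variable (ψ : ℕ → ℂ)

theorem psiFact_succ (n : ℕ) : psiFact ψ (n + 1) = psiFact ψ n * ψ (n + 1) := rfl

theorem psiFact_ne_zero (hψ : ∀ n : ℕ, 1 ≤ n → ψ n ≠ 0) (n : ℕ) : psiFact ψ n ≠ 0 := by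
  induction n with
  | zero => exact one_ne_zero
  | succ n ih => exact mul_ne_zero ih (hψ _ n.succ_pos)

theorem Fker_self (n : ℕ) : Fker ψ n n = 0 := by
  simp [Fker]

theorem Fker_zero_right (hψ0 : ψ 0 = 0) {n : ℕ} (hn : ψ n ≠ 0) : Fker ψ n 0 = 1 := by
  simp [Fker, hψ0, hn]

theorem psiBinom_zero_right (hψ : ∀ n : ℕ, 1 ≤ n → ψ n ≠ 0) (n : ℕ) : psiBinom ψ n 0 = 1 := by
  simp [psiBinom, psiFact, psiFact_ne_zero ψ hψ n]

theorem psiBinom_self (hψ : ∀ n : ℕ, 1 ≤ n → ψ n ≠ 0) (n : ℕ) : psiBinom ψ n n = 1 := by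
  simp [psiBinom, psiFact, psiFact_ne_zero ψ hψ n]

/-- At `k = n` the junk value `psiBinom ψ n (n + 1)` is killed by `F(n+1, n+1) = 0`. -/
theorem psiBinom_succ_succ (hψ : ∀ n : ℕ, 1 ≤ n → ψ n ≠ 0) {n k : ℕ} (hk : k ≤ n) :
    psiBinom ψ (n + 1) (k + 1) = psiBinom ψ n k + Fker ψ (n + 1) (k + 1) * psiBinom ψ n (k + 1) := by
  rcases hk.eq_or_lt with rfl | hlt
  · rw [psiBinom_self ψ hψ, psiBinom_self ψ hψ, Fker_self, zero_mul, add_zero]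
  obtain ⟨m, rfl⟩ : ∃ m, n = k + 1 + m := ⟨n - k - 1, by omega⟩
  have hf := psiFact_ne_zero ψ hψ
  have hk1 := hψ (k + 1) (by omega)
  have hm1 := hψ (m + 1) (by omega)
  simp only [psiBinom, Fker, show k + 1 + m + 1 - (k + 1) = m + 1 by omega,
    show k + 1 + m - k = m + 1 by omega, show k + 1 + m - (k + 1) = m by omega,
    psiFact_succ ψ (k + 1 + m), psiFact_succ ψ k, psiFact_succ ψ m]
  field_simp [hf k, hf m]
  ring

theorem psiBinom_succ_zero (hψ0 : ψ 0 = 0) (hψ : ∀ n : ℕ, 1 ≤ n → ψ n ≠ 0) (n : ℕ) :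
    psiBinom ψ (n + 1) 0 = Fker ψ (n + 1) 0 * psiBinom ψ n 0 := by
  rw [psiBinom_zero_right ψ hψ, psiBinom_zero_right ψ hψ,
    Fker_zero_right ψ hψ0 (hψ _ n.succ_pos), one_mul]

theorem sum_psiBinom_succ (hψ0 : ψ 0 = 0) (hψ : ∀ n : ℕ, 1 ≤ n → ψ n ≠ 0)
    (f : ℕ → ℕ → ℂ) (n : ℕ) :
    ∑ k ∈ range (n + 2), psiBinom ψ (n + 1) k * f k (n + 1 - k)
      = ∑ k ∈ range (n + 1), psiBinom ψ n k * f (k + 1) (n - k)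
        + ∑ k ∈ range (n + 1), Fker ψ (n + 1) k * psiBinom ψ n k * f k (n - k + 1) := by
  have pascal : ∀ k ∈ range (n + 1),
      psiBinom ψ (n + 1) (k + 1) * f (k + 1) (n + 1 - (k + 1))
        = psiBinom ψ n k * f (k + 1) (n - k)
          + Fker ψ (n + 1) (k + 1) * psiBinom ψ n (k + 1) * f (k + 1) (n + 1 - (k + 1)) := by
    intro k hk
    rw [psiBinom_succ_succ ψ hψ (Nat.lt_succ_iff.mp (mem_range.mp hk)),
      show n + 1 - (k + 1) = n - k by omega]
    ring
  rw [sum_range_succ', sum_congr rfl pascal, sum_add_distrib, add_assoc, psiBinom_succ_zero ψ hψ0 hψ,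
    ← sum_range_succ' (fun k => Fker ψ (n + 1) k * psiBinom ψ n k * f k (n + 1 - k)),
    sum_range_succ _ (n + 1), Fker_self, zero_mul, zero_mul, add_zero]
  congr 1
  refine sum_congr rfl fun k hk => ?_
  rw [show n + 1 - k = n - k + 1 by have := mem_range.mp hk; omega]

end PsiBinom

section Fontane

variable (ψ : ℕ → ℂ) (L : List (ℕ × ℕ))

noncomputable def fontaneKernel (n k : ℕ) : ℂ :=
  (L.map fun p => Fker ψ (n + p.1) (k + p.2)).prod

theorem fontaneL_eq_sum (a b : ℕ → ℂ) (n : ℕ) :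
    fontaneL ψ L a b n
      = ∑ k ∈ range (n + 1), psiBinom ψ n k * (fontaneKernel ψ L n k * a k * b (n - k)) :=
  sum_congr rfl fun _ _ => by rw [fontaneKernel]; ring

theorem fontaneKernel_map_succ_succ (n k : ℕ) :
    fontaneKernel ψ (L.map fun p => (p.1 + 1, p.2 + 1)) n k = fontaneKernel ψ L (n + 1) (k + 1) := by
  simp only [fontaneKernel, List.map_map, Function.comp_def, ← add_assoc, Nat.add_right_comm _ 1]

theorem fontaneKernel_map_succ_append (n k : ℕ) :
    fontaneKernel ψ ((L.map fun p => (p.1 + 1, p.2)) ++ [(1, 0)]) n k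
      = fontaneKernel ψ L (n + 1) k * Fker ψ (n + 1) k := by
  simp only [fontaneKernel, List.map_append, List.map_map, Function.comp_def, List.prod_append,
    List.map_singleton, List.prod_singleton, add_zero]
  simp only [← add_assoc, Nat.add_right_comm _ 1]

end Fontane

theorem Dpsi_fontaneL_general (ψ : ℕ → ℂ) (hψ0 : ψ 0 = 0) (hψ : ∀ n : ℕ, 1 ≤ n → ψ n ≠ 0)
    (L : List (ℕ × ℕ)) (a b : ℕ → ℂ) (n : ℕ) :
    Dpsi (fontaneL ψ L a b) n
      = fontaneL ψ (L.map fun p => (p.1 + 1, p.2 + 1)) (Dpsi a) b n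
        + fontaneL ψ ((L.map fun p => (p.1 + 1, p.2)) ++ [(1, 0)]) a (Dpsi b) n := by
  rw [Dpsi, fontaneL_eq_sum, fontaneL_eq_sum, fontaneL_eq_sum,
    sum_psiBinom_succ ψ hψ0 hψ fun k m => fontaneKernel ψ L (n + 1) k * a k * b m]
  simp only [fontaneKernel_map_succ_succ, fontaneKernel_map_succ_append, Dpsi]
  congr 1
  exact sum_congr rfl fun _ _ => by ring

/-- Leibniz rule for the concatenated Fontané products. -/
theorem Dpsi_fontaneL (ψ : ℕ → ℂ) (hψ0 : ψ 0 = 0) (hψ1 : ψ 1 = 1) (hψ : ∀ n : ℕ, 1 ≤ n → ψ n ≠ 0)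
    (L : List (ℕ × ℕ)) (hL : ∀ p ∈ L, p.2 < p.1) (a b : ℕ → ℂ) (n : ℕ) :
    Dpsi (fontaneL ψ L a b) n
      = fontaneL ψ (L.map fun p => (p.1 + 1, p.2 + 1)) (Dpsi a) b n
        + fontaneL ψ ((L.map fun p => (p.1 + 1, p.2)) ++ [(1, 0)]) a (Dpsi b) n :=
  Dpsi_fontaneL_general ψ hψ0 hψ L a b n
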